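/- arXiv:2302.07177 — 4 statements merged into one kernel-verified Lean document; each statement's English description precedes it below -/
import Mathlib

section
/- Let Ω ⊂ ℝP^d (or the sphere S^d) be a properly convex open set, and let (g_n) be a sequence in GL_{d+1}(ℝ) with g_n(Ω) = Ω for all n, such that g_n converges (as matrices, up to scaling) to a nonzero non-invertible matrix g. Then both P(ker g) and P(im g) intersect the closure of Ω but do not intersect Ω. -/
/-!
The inverses `(g n)⁻¹` also preserve `C`; normalised, they converge along a subsequence to a
nonzero `h`, and both `glim` and `h` map `C` into `closure C`. The products
`(c n • g n) * (r n • (g n)⁻¹)` are scalar matrices, hence so are `glim * h` and `h * glim`, which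
have zero determinant and therefore vanish. A nonzero matrix mapping the open set `C` into the
salient cone `closure C` kills no point of `C`, since it would map a small segment centred at that
point to a segment centred at `0`. So `h v₀ ∈ ker glim` and `glim v₀ ∈ im glim` are nonzero points
of `closure C`, while `ker glim` and `im glim ⊆ ker h` avoid `C`.
-/

open Filter

/-- A set `C ⊆ ℝ^{d+1}` is a properly convex open cone if it is open, convex, nonempty,
invariant under positive scaling, and its closure is contained (away from `0`) in an open
linear half-space.  Rays of such a cone are exactly the points of a properly convex open
subset of the projective space `ℝP^d` (or of the sphere `S^d`). -/
def IsProperlyConvexCone {d : ℕ} (C : Set (Fin (d + 1) → ℝ)) : Prop :=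
  IsOpen C ∧ Convex ℝ C ∧ C.Nonempty ∧
    (∀ v ∈ C, ∀ t : ℝ, 0 < t → t • v ∈ C) ∧
    ∃ f : (Fin (d + 1) → ℝ) →ₗ[ℝ] ℝ, ∀ v ∈ closure C, v ≠ 0 → 0 < f v

open Topology Set

theorem LinearMap.eq_zero_of_mapsTo_of_apply_eq_zero {𝕜 E F : Type*} [NontriviallyNormedField 𝕜]
    [AddCommGroup E] [Module 𝕜 E] [TopologicalSpace E] [IsTopologicalAddGroup E]
    [ContinuousSMul 𝕜 E] [AddCommGroup F] [Module 𝕜 F] {C : Set E} {K : Set F} (hK : ∀ x ∈ K, -x ∈ K → x = 0)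
    {M : E →ₗ[𝕜] F} (hM : MapsTo M C K) {v : E} (hC : C ∈ 𝓝 v) (hv : M v = 0) : M = 0 := by
  ext u
  have hplus : Tendsto (fun t : 𝕜 => v + t • u) (𝓝 0) (𝓝 v) := by
    simpa using tendsto_const_nhds (x := v) |>.add ((tendsto_id (x := 𝓝 (0 : 𝕜))).smul_const u)
  have hminus : Tendsto (fun t : 𝕜 => v - t • u) (𝓝 0) (𝓝 v) := by
    simpa using tendsto_const_nhds (x := v) |>.sub ((tendsto_id (x := 𝓝 (0 : 𝕜))).smul_const u)
  have hnear : ∀ᶠ t in 𝓝[≠] (0 : 𝕜), v + t • u ∈ C ∧ v - t • u ∈ C :=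
    ((hplus.eventually hC).and (hminus.eventually hC)).filter_mono nhdsWithin_le_nhds
  obtain ⟨t, ⟨htp, htm⟩, ht0⟩ := (hnear.and self_mem_nhdsWithin).exists
  have hMtu : t • M u ∈ K := by simpa [hv] using hM htp
  have hMtu' : -(t • M u) ∈ K := by simpa [hv] using hM htm
  exact (smul_eq_zero.1 (hK _ hMtu hMtu')).resolve_left ht0

theorem eq_zero_of_mem_of_neg_mem_of_pos {E : Type*} [AddCommGroup E] [Module ℝ E]
    {K : Set E} (f : E →ₗ[ℝ] ℝ) (hf : ∀ v ∈ K, v ≠ 0 → 0 < f v) {x : E} (hx : x ∈ K)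
    (hnx : -x ∈ K) : x = 0 := by
  by_contra h
  have := hf _ hnx (neg_ne_zero.2 h)
  rw [map_neg] at this
  linarith [hf x hx h]

theorem Matrix.mulVec_ne_zero_of_mapsTo {m n : Type*} [Fintype n] {C : Set (n → ℝ)}
    {K : Set (m → ℝ)} (hC : IsOpen C) (hK : ∀ x ∈ K, -x ∈ K → x = 0)
    {M : Matrix m n ℝ} (hM : MapsTo M.mulVec C K) (hM0 : M ≠ 0) {v : n → ℝ} (hv : v ∈ C) :
    M.mulVec v ≠ 0 := fun hMv =>
  hM0 <| Matrix.mulVec_injective <| funext fun u => by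
    simpa using LinearMap.congr_fun
      (LinearMap.eq_zero_of_mapsTo_of_apply_eq_zero (M := M.mulVecLin) hK hM (hC.mem_nhds hv) hMv) u

theorem Matrix.mapsTo_closure_of_tendsto_pos_smul {ι m n : Type*} [Fintype n] {l : Filter ι}
    [l.NeBot] {C : Set (n → ℝ)} {D : Set (m → ℝ)} (hD : ∀ v ∈ D, ∀ t : ℝ, 0 < t → t • v ∈ D)
    {A : ι → Matrix m n ℝ} (hA : ∀ i, MapsTo (A i).mulVec C D) {r : ι → ℝ} (hr : ∀ i, 0 < r i)
    {B : Matrix m n ℝ} (hB : Tendsto (fun i => r i • A i) l (𝓝 B)) :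
    MapsTo B.mulVec C (closure D) := fun v hv =>
  mem_closure_of_tendsto ((continuous_id.matrix_mulVec continuous_const).tendsto B |>.comp hB)
    (Eventually.of_forall fun i => by
      simpa [Matrix.smul_mulVec] using hD _ (hA i hv) _ (hr i))

theorem exists_tendsto_pos_smul_subseq {E : Type*} [NormedAddCommGroup E] [NormedSpace ℝ E]
    [ProperSpace E] {u : ℕ → E} (hu : ∀ n, u n ≠ 0) :
    ∃ L ≠ 0, ∃ φ : ℕ → ℕ, StrictMono φ ∧ ∃ r : ℕ → ℝ, (∀ k, 0 < r k) ∧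
      Tendsto (fun k => r k • u (φ k)) atTop (𝓝 L) := by
  obtain ⟨L, hL, φ, hφ, hlim⟩ := (isCompact_sphere (0 : E) 1).tendsto_subseq
    (x := fun n => ‖u n‖⁻¹ • u n) fun n => by simp [norm_smul, hu n]
  exact ⟨L, ne_zero_of_mem_unit_sphere ⟨L, hL⟩, φ, hφ, fun k => ‖u (φ k)‖⁻¹,
    fun k => by simpa using hu (φ k), hlim⟩

theorem smul_mul_smul_mem_span_one {R A : Type*} [CommSemiring R] [Semiring A] [Algebra R A]
    {x y : A} (h : x * y = 1) (a b : R) : (a • x) * (b • y) ∈ Submodule.span R {1} := by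
  rw [smul_mul_smul_comm, h]
  exact Submodule.smul_mem _ _ (Submodule.mem_span_singleton_self 1)

theorem Matrix.eq_zero_of_mem_span_one_of_det_eq_zero {n R : Type*} [Fintype n] [DecidableEq n]
    [Nonempty n] [CommRing R] [NoZeroDivisors R] {M : Matrix n n R}
    (hM : M ∈ Submodule.span R {1}) (hdet : M.det = 0) : M = 0 := by
  obtain ⟨t, rfl⟩ := Submodule.mem_span_singleton.1 hM
  rw [Matrix.det_smul, Matrix.det_one, mul_one] at hdet
  rw [(pow_eq_zero_iff Fintype.card_ne_zero).1 hdet, zero_smul]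

theorem Matrix.mul_eq_zero_of_tendsto_of_mul_mem_span_one {ι n 𝕜 : Type*} [Fintype n]
    [DecidableEq n] [Nonempty n] [NontriviallyNormedField 𝕜] [CompleteSpace 𝕜] {l : Filter ι}
    [l.NeBot] {A B : ι → Matrix n n 𝕜} {A₀ B₀ : Matrix n n 𝕜} (hA : Tendsto A l (𝓝 A₀))
    (hB : Tendsto B l (𝓝 B₀)) (hAB : ∀ i, A i * B i ∈ Submodule.span 𝕜 {1})
    (hdet : (A₀ * B₀).det = 0) : A₀ * B₀ = 0 :=
  Matrix.eq_zero_of_mem_span_one_of_det_eq_zero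
    ((Submodule.closed_of_finiteDimensional _).mem_of_tendsto (hA.mul hB)
      (Eventually.of_forall hAB)) hdet

attribute [local instance] Matrix.normedAddCommGroup Matrix.normedSpace

/-- Let `Ω ⊂ ℝP^d` be a properly convex open set (encoded by its cone
`C ⊆ ℝ^{d+1}`), and `(g_n)` a sequence of invertible matrices preserving `Ω`, converging up
to positive scaling to a nonzero non-invertible matrix `g`.  Then the projectivizations of
`ker g` and of `im g` both intersect the closure of `Ω` but do not intersect `Ω`: there is a
nonzero vector of `ker g` (resp. of `im g`) in the closure of the cone `C`, while no vector
of `C` lies in `ker g` (resp. in `im g`). -/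
theorem kernel_image_meet_boundary {d : ℕ} (C : Set (Fin (d + 1) → ℝ))
    (hC : IsProperlyConvexCone C)
    (g : ℕ → Matrix (Fin (d + 1)) (Fin (d + 1)) ℝ)
    (hginv : ∀ n, IsUnit (g n).det)
    (hgC : ∀ n, (g n).mulVec '' C = C)
    (glim : Matrix (Fin (d + 1)) (Fin (d + 1)) ℝ)
    (hscal : ∃ c : ℕ → ℝ, (∀ n, 0 < c n) ∧
      Tendsto (fun n => c n • g n) atTop (nhds glim))
    (hg0 : glim ≠ 0) (hgdet : glim.det = 0) :
    ((∃ v : Fin (d + 1) → ℝ, v ≠ 0 ∧ glim.mulVec v = 0 ∧ v ∈ closure C) ∧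
      ∀ v ∈ C, glim.mulVec v ≠ 0) ∧
    ((∃ v : Fin (d + 1) → ℝ, v ≠ 0 ∧ (∃ w, glim.mulVec w = v) ∧ v ∈ closure C) ∧
      ∀ v ∈ C, ¬ ∃ w, glim.mulVec w = v) := by
  obtain ⟨hopen, -, ⟨v₀, hv₀⟩, hcone, f, hf⟩ := hC
  obtain ⟨c, hc, hcg⟩ := hscal
  have hsal : ∀ x ∈ closure C, -x ∈ closure C → x = 0 := fun _ =>
    eq_zero_of_mem_of_neg_mem_of_pos f hf
  have hgmaps : ∀ n, MapsTo (g n).mulVec C C := fun n =>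
    (mapsTo_image _ C).mono_right (hgC n).subset
  have hinvmaps : ∀ n, MapsTo (g n)⁻¹.mulVec C C := fun n v hv => by
    rw [← hgC n] at hv
    obtain ⟨w, hw, rfl⟩ := hv
    rwa [Matrix.mulVec_mulVec, Matrix.nonsing_inv_mul _ (hginv n), Matrix.one_mulVec]
  obtain ⟨h, hh0, φ, hφ, r, hr, hrh⟩ := exists_tendsto_pos_smul_subseq (u := fun n => (g n)⁻¹)
    fun n h0 => (Matrix.isUnit_nonsing_inv_det _ (hginv n)).ne_zero (by simp [h0])
  have hcgφ := hcg.comp hφ.tendsto_atTop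
  have hglim_maps := Matrix.mapsTo_closure_of_tendsto_pos_smul hcone hgmaps hc hcg
  have hh_maps := Matrix.mapsTo_closure_of_tendsto_pos_smul hcone (fun k => hinvmaps (φ k)) hr hrh
  have hgh : glim * h = 0 := Matrix.mul_eq_zero_of_tendsto_of_mul_mem_span_one hcgφ hrh
    (fun k => smul_mul_smul_mem_span_one (Matrix.mul_nonsing_inv _ (hginv _)) _ _)
    (by rw [Matrix.det_mul, hgdet, zero_mul])
  have hhg : h * glim = 0 := Matrix.mul_eq_zero_of_tendsto_of_mul_mem_span_one hrh hcgφ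
    (fun k => smul_mul_smul_mem_span_one (Matrix.nonsing_inv_mul _ (hginv _)) _ _)
    (by rw [Matrix.det_mul, hgdet, mul_zero])
  have hglim_ker := fun v => Matrix.mulVec_ne_zero_of_mapsTo (v := v) hopen hsal hglim_maps hg0
  have hh_ker := fun v => Matrix.mulVec_ne_zero_of_mapsTo (v := v) hopen hsal hh_maps hh0
  refine ⟨⟨⟨h.mulVec v₀, hh_ker v₀ hv₀, ?_, hh_maps hv₀⟩, hglim_ker⟩,
    ⟨glim.mulVec v₀, hglim_ker v₀ hv₀, ⟨v₀, rfl⟩, hglim_maps hv₀⟩, ?_⟩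
  · rw [Matrix.mulVec_mulVec, hgh, Matrix.zero_mulVec]
  · rintro v hv ⟨w, rfl⟩
    exact hh_ker _ hv (by rw [Matrix.mulVec_mulVec, hhg, Matrix.zero_mulVec])
end

section
/- Let K be a group such that every finite-index subgroup of K has trivial center, and let S be a finite-index subgroup of K × ℤ. Then the center Z(S) equals S ∩ ({1} × ℤ), and the quotient S/Z(S) is isomorphic to π(S), where π : K × ℤ → K is the projection onto the first factor. -/
/-- Let `K` be a group in which every finite-index subgroup has trivial
center, and let `S` be a finite-index subgroup of `K × ℤ`.  Then the center `Z(S)` equals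
`S ∩ ({1} × ℤ)`, and `S/Z(S)` is isomorphic to `π(S)`, where `π : K × ℤ → K` is the
projection onto the first factor. -/
theorem center_of_finiteIndex_subgroup_of_prod {K : Type*} [Group K]
    (hK : ∀ H : Subgroup K, H.FiniteIndex → Subgroup.center H = ⊥)
    (S : Subgroup (K × Multiplicative ℤ)) (hS : S.FiniteIndex) :
    (Subgroup.center S).map S.subtype =
      S ⊓ Subgroup.prod (⊥ : Subgroup K) (⊤ : Subgroup (Multiplicative ℤ)) ∧
    Nonempty ((S ⧸ Subgroup.center S) ≃*
      S.map (MonoidHom.fst K (Multiplicative ℤ))) := by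
  have hsur : Function.Surjective (MonoidHom.fst K (Multiplicative ℤ)) :=
    fun k => ⟨(k, 1), rfl⟩
  set P := S.map (MonoidHom.fst K (Multiplicative ℤ)) with hPdef
  have hPfi : P.FiniteIndex := by
    refine ⟨fun h0 => hS.index_ne_zero ?_⟩
    have hdvd := Subgroup.index_map_dvd S hsur
    exact Nat.eq_zero_of_zero_dvd (h0 ▸ hdvd)
  have hcen := hK P hPfi
  have key : ∀ x : S, x ∈ Subgroup.center S ↔ (x : K × Multiplicative ℤ).1 = 1 := by
    intro x
    constructor
    · intro hx
      have hmem : (x : K × Multiplicative ℤ).1 ∈ P := ⟨x, x.2, rfl⟩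
      have hc : (⟨_, hmem⟩ : P) ∈ Subgroup.center P := by
        rw [Subgroup.mem_center_iff]
        rintro ⟨g, hg⟩
        obtain ⟨y, hyS, rfl⟩ := hg
        have h := (Subgroup.mem_center_iff.mp hx) ⟨y, hyS⟩
        have h1 := congrArg Prod.fst (congrArg (Subtype.val) h)
        exact Subtype.ext h1
      rw [hcen, Subgroup.mem_bot] at hc
      exact congrArg Subtype.val hc
    · intro hx
      rw [Subgroup.mem_center_iff]
      intro y
      apply Subtype.ext
      apply Prod.ext
      · simp only [Subgroup.coe_mul, Prod.fst_mul, hx, mul_one, one_mul]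
      · simp only [Subgroup.coe_mul, Prod.snd_mul]
        exact mul_comm _ _
  constructor
  · ext x
    simp only [Subgroup.mem_map, Subgroup.mem_inf, Subgroup.mem_prod, Subgroup.mem_bot,
      Subgroup.mem_top, and_true]
    constructor
    · rintro ⟨y, hy, rfl⟩
      exact ⟨y.2, (key y).mp hy⟩
    · rintro ⟨hxS, hx1⟩
      exact ⟨⟨x, hxS⟩, (key _).mpr hx1, rfl⟩
  · set φ := (MonoidHom.fst K (Multiplicative ℤ)).comp S.subtype with hφ
    have hker : φ.ker = Subgroup.center S := by
      ext x
      rw [MonoidHom.mem_ker]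
      exact (key x).symm
    have hrange : φ.range = P := by
      rw [hφ, MonoidHom.range_comp, Subgroup.range_subtype]
    exact ⟨((QuotientGroup.quotientMulEquivOfEq hker.symm).trans
      (QuotientGroup.quotientKerEquivRange φ)).trans (MulEquiv.subgroupCongr hrange)⟩
end

section
/- Let D and D' be closed convex subsets of S^d (the sphere of rays in ℝ^{d+1}) with non-empty interior, intersecting along a set F = D ∩ D' which is a codimension-1 face of both. Then D ∪ D' is convex if and only if every point of the relative boundary ∂F is contained in the boundary of a closed half-space of S^d that contains D ∪ D'. -/
/-!
Write `F = C ∩ D` and `H = span F`, a hyperplane `ker φ`. As `F` is a face of `C` with nonempty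
relative interior, `C ∩ H = F`; hence `C` lies on one side of `H` (a segment of `C` crossing `H`
would cross it inside `F`). The same holds for `D`, and the two sides are opposite:
otherwise the cones would share points off `H` next to a relative interior point of `F`.

(⇒) A relative boundary point `x` of `F` is not interior to `C ∪ D`, since the points of `H \ F`
near `x` lie outside `C ∪ D`. A supporting hyperplane of the convex cone `C ∪ D` at `x` passes
through the origin.

(⇐) A segment from `C` to `D` meets `H` at some `z`, and it suffices that `z ∈ F`. Otherwise the
segment from a relative interior point `p` of `F` to `z` leaves `F` at a relative boundary point
`x`. The supporting functional `f` at `x` is nonnegative at `p` and `z`, so it vanishes at `p`,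
hence on `H`. Thus `f` is a multiple of `φ`, and being nonnegative on both sides of `H` it is `0`.
-/

open Set Filter Topology AffineMap

section

variable {E : Type*} [AddCommGroup E] [Module ℝ E] {S : Set E}

theorem Convex.add_mem_of_smul_mem (hS : Convex ℝ S)
    (hcone : ∀ v ∈ S, ∀ t : ℝ, 0 < t → t • v ∈ S) {a b : E} (ha : a ∈ S) (hb : b ∈ S) :
    a + b ∈ S := by
  have hmid : (1 / 2 : ℝ) • a + (1 / 2 : ℝ) • b ∈ S :=
    hS ha hb (by norm_num) (by norm_num) (by norm_num)
  convert hcone _ hmid 2 two_pos using 1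
  module

theorem zero_mem_of_isClosed_of_smul_mem [TopologicalSpace E] [ContinuousSMul ℝ E]
    (hS : IsClosed S) (hne : S.Nonempty) (hcone : ∀ v ∈ S, ∀ t : ℝ, 0 < t → t • v ∈ S) :
    (0 : E) ∈ S := by
  obtain ⟨v, hv⟩ := hne
  have hlim : Tendsto (fun t : ℝ => t • v) (𝓝[>] 0) (𝓝 0) := by
    simpa using (tendsto_id.smul_const v).mono_left (nhdsWithin_le_nhds (a := (0 : ℝ)))
  exact hS.mem_of_tendsto hlim (eventually_nhdsWithin_of_forall fun t ht => hcone v hv t ht)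

theorem exists_mem_openSegment_apply_eq_zero (φ : E →ₗ[ℝ] ℝ) {a b : E} (ha : φ a < 0)
    (hb : 0 < φ b) : ∃ c ∈ openSegment ℝ a b, φ c = 0 := by
  rw [← LinearMap.coe_toAffineMap, ← mem_image, image_openSegment, LinearMap.coe_toAffineMap,
    openSegment_eq_Ioo (ha.trans hb)]
  exact ⟨ha, hb⟩

theorem exists_mem_segment_apply_eq_zero (φ : E →ₗ[ℝ] ℝ) {a b : E} (ha : φ a ≤ 0)
    (hb : 0 ≤ φ b) : ∃ c ∈ segment ℝ a b, φ c = 0 := by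
  rw [← LinearMap.coe_toAffineMap, ← mem_image, image_segment, LinearMap.coe_toAffineMap,
    segment_eq_Icc (ha.trans hb)]
  exact ⟨ha, hb⟩

theorem segment_subset_union_segment {a b c : E} (hc : c ∈ segment ℝ a b) :
    segment ℝ a b ⊆ segment ℝ a c ∪ segment ℝ c b := by
  intro z hz
  simp only [mem_union, mem_segment_iff_wbtw] at hc hz ⊢
  obtain ⟨s, hs, rfl⟩ := hc
  obtain ⟨t, ht, rfl⟩ := id hz
  rcases wbtw_or_wbtw_smul_vadd_of_nonneg a (b -ᵥ a) ht.1 hs.1 with h | h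
  · exact Or.inl h
  · exact Or.inr (hz.trans_left_right h)

theorem IsExtreme.forall_nonneg_or_forall_nonpos {F : Set E} (hS : Convex ℝ S)
    (hSF : IsExtreme ℝ S F) {φ : E →ₗ[ℝ] ℝ} (hF : ∀ y ∈ F, φ y = 0)
    (hker : ∀ y ∈ S, φ y = 0 → y ∈ F) : (∀ y ∈ S, 0 ≤ φ y) ∨ ∀ y ∈ S, φ y ≤ 0 := by
  by_contra! h
  obtain ⟨⟨a, haS, ha⟩, b, hbS, hb⟩ := h
  obtain ⟨c, hc, hφc⟩ := exists_mem_openSegment_apply_eq_zero φ ha hb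
  have hcF := hker c (hS.openSegment_subset haS hbS hc) hφc
  exact ha.ne (hF a (hSF.left_mem_of_mem_openSegment haS hbS hcF hc))

theorem LinearMap.eq_zero_of_ker_le_of_nonneg {f ψ : E →ₗ[ℝ] ℝ}
    (hker : LinearMap.ker ψ ≤ LinearMap.ker f) {a b : E} (hψa : 0 < ψ a) (hfa : 0 ≤ f a)
    (hψb : ψ b < 0) (hfb : 0 ≤ f b) : f = 0 := by
  have hprop : ∀ y, f y = ψ y / ψ a * f a := by
    intro y
    have h := LinearMap.mem_ker.1 (hker (x := y - (ψ y / ψ a) • a) (by simp [hψa.ne']))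
    simp only [map_sub, map_smul, smul_eq_mul] at h
    linarith
  have hfa0 : f a = 0 := by
    have hfb' := hprop b
    have hratio : ψ b / ψ a < 0 := div_neg_of_neg_of_pos hψb hψa
    nlinarith
  ext y
  simp [hprop y, hfa0]

theorem Submodule.exists_ne_zero_ker_eq_of_finrank_add_one {K V : Type*} [Field K] [AddCommGroup V]
    [Module K V] [FiniteDimensional K V] (W : Submodule K V)
    (h : Module.finrank K W + 1 = Module.finrank K V) :
    ∃ φ : V →ₗ[K] K, φ ≠ 0 ∧ LinearMap.ker φ = W := by
  have hq : Module.finrank K (V ⧸ W) = Module.finrank K K := by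
    have := W.finrank_quotient_add_finrank
    rw [Module.finrank_self]
    omega
  let φ := (LinearEquiv.ofFinrankEq _ _ hq).toLinearMap ∘ₗ W.mkQ
  have hker : LinearMap.ker φ = W := by
    rw [LinearEquiv.ker_comp, Submodule.ker_mkQ]
  refine ⟨φ, ?_, hker⟩
  rintro hφ
  rw [hφ, LinearMap.ker_zero] at hker
  rw [← hker, finrank_top] at h
  omega

end

section

variable {E : Type*} [NormedAddCommGroup E] [NormedSpace ℝ E] {s : Set E} {p : E}

theorem exists_pos_add_smul_mem_of_mem_intrinsicInterior (hp : p ∈ intrinsicInterior ℝ s)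
    {v : E} (hv : v ∈ (affineSpan ℝ s).direction) : ∃ t : ℝ, 0 < t ∧ p + t • v ∈ s := by
  obtain ⟨y, hy, rfl⟩ := hp
  let g : ℝ → affineSpan ℝ s := fun t =>
    ⟨t • v +ᵥ (y : E), AffineSubspace.vadd_mem_of_mem_direction (Submodule.smul_mem _ t hv) y.2⟩
  have hg : Continuous g := by fun_prop
  have hg0 : g 0 = y := Subtype.ext (by simp [g])
  have hev : ∀ᶠ t in 𝓝 (0 : ℝ), g t ∈ (↑) ⁻¹' s :=
    hg.continuousAt.preimage_mem_nhds (hg0 ▸ mem_interior_iff_mem_nhds.1 hy)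
  obtain ⟨t, ht, ht0⟩ :=
    ((hev.filter_mono nhdsWithin_le_nhds).and (self_mem_nhdsWithin (s := Ioi 0))).exists
  exact ⟨t, ht0, by simpa [g, add_comm] using ht⟩

theorem IsExtreme.inter_affineSpan_subset {S : Set E} (hSs : IsExtreme ℝ S s)
    (hp : p ∈ intrinsicInterior ℝ s) : S ∩ affineSpan ℝ s ⊆ s := by
  rintro c ⟨hcS, hcA⟩
  have hps : p ∈ s := intrinsicInterior_subset hp
  obtain ⟨t, ht, hq⟩ := exists_pos_add_smul_mem_of_mem_intrinsicInterior hp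
    (AffineSubspace.vsub_mem_direction (subset_affineSpan ℝ s hps) hcA)
  have hseg : p ∈ openSegment ℝ c (p + t • (p -ᵥ c)) := by
    refine ⟨t / (1 + t), 1 / (1 + t), by positivity, by positivity, by field_simp; ring, ?_⟩
    rw [vsub_eq_sub]
    match_scalars
    · field_simp
      ring
    · field_simp
  exact hSs.left_mem_of_mem_openSegment hcS (hSs.subset hq) hps hseg

theorem LinearMap.apply_eq_zero_of_nonneg_of_mem_intrinsicInterior {f : E →ₗ[ℝ] ℝ}
    (hf : ∀ y ∈ s, 0 ≤ f y) (hp : p ∈ intrinsicInterior ℝ s) (hfp : f p = 0) {z : E}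
    (hz : z ∈ affineSpan ℝ s) : f z = 0 := by
  have hv : z -ᵥ p ∈ (affineSpan ℝ s).direction :=
    AffineSubspace.vsub_mem_direction hz (subset_affineSpan ℝ s (intrinsicInterior_subset hp))
  obtain ⟨t, ht, hpos⟩ := exists_pos_add_smul_mem_of_mem_intrinsicInterior hp hv
  obtain ⟨t', ht', hneg⟩ := exists_pos_add_smul_mem_of_mem_intrinsicInterior hp (neg_mem hv)
  have h₁ := hf _ hpos
  have h₂ := hf _ hneg
  simp only [vsub_eq_sub, map_add, map_smul, map_neg, map_sub, hfp, smul_eq_mul, sub_zero,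
    zero_add] at h₁ h₂
  nlinarith

theorem exists_mem_intrinsicFrontier_openSegment (hs : IsClosed s)
    (hp : p ∈ intrinsicInterior ℝ s) {c : E} (hcA : c ∈ affineSpan ℝ s) (hcs : c ∉ s) :
    ∃ x ∈ intrinsicFrontier ℝ s, x ∈ openSegment ℝ p c := by
  obtain ⟨y, hy, rfl⟩ := hp
  let g : ℝ → affineSpan ℝ s := fun t =>
    ⟨lineMap (y : E) c (projIcc 0 1 zero_le_one t : ℝ), AffineMap.lineMap_mem _ y.2 hcA⟩
  have hg : Continuous g :=
    (lineMap_continuous.comp (continuous_subtype_val.comp continuous_projIcc)).subtype_mk _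
  have hgy : ∀ t, (projIcc 0 1 zero_le_one t : ℝ) = 0 → g t = y := fun t ht =>
    Subtype.ext (by simp [g, ht])
  have h0 : (0 : ℝ) ∈ g ⁻¹' ((↑) ⁻¹' s) := by
    simpa [hgy 0 (by simp)] using interior_subset hy
  have h1 : (1 : ℝ) ∉ g ⁻¹' ((↑) ⁻¹' s) := by simpa [g] using hcs
  obtain ⟨t, hfr⟩ := nonempty_frontier_iff.2 ⟨⟨0, h0⟩, ne_univ_iff_exists_notMem _ |>.2 ⟨1, h1⟩⟩
  have hgt : g t ∈ frontier ((↑) ⁻¹' s) := hg.frontier_preimage_subset _ hfr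
  set u := projIcc (0 : ℝ) 1 zero_le_one t
  refine ⟨g t, ⟨g t, hgt, rfl⟩, openSegment_eq_image_lineMap ℝ (y : E) c ▸ ⟨u, ⟨?_, ?_⟩, rfl⟩⟩
  · exact u.2.1.lt_of_ne fun hu => hgt.2 (hgy t hu.symm ▸ hy)
  · refine u.2.2.lt_of_ne fun hu => hcs ?_
    simpa [g, show (projIcc (0 : ℝ) 1 zero_le_one t : ℝ) = 1 from hu] using (hs.preimage continuous_subtype_val).frontier_subset hgt

theorem notMem_interior_of_mem_intrinsicFrontier {S : Set E} (hS : S ∩ affineSpan ℝ s ⊆ s)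
    {x : E} (hx : x ∈ intrinsicFrontier ℝ s) : x ∉ interior S := by
  obtain ⟨y, hy, rfl⟩ := hx
  intro hyS
  rw [← frontier_compl] at hy
  obtain ⟨z, hzS, hzs⟩ := mem_closure_iff.1 (frontier_subset_closure hy) _
    (isOpen_interior.preimage continuous_subtype_val) hyS
  exact hzs (hS ⟨interior_subset hzS, z.2⟩)

end

section

variable {E : Type*} [NormedAddCommGroup E] [NormedSpace ℝ E] {C D : Set E}

theorem LinearMap.exists_apply_ne_zero_of_nonempty_interior {ψ : E →ₗ[ℝ] ℝ} (hψ : ψ ≠ 0)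
    {S : Set E} (hS : (interior S).Nonempty) : ∃ y ∈ S, ψ y ≠ 0 := by
  by_contra! h
  exact hψ (LinearMap.ker_eq_top.1
    ((LinearMap.ker ψ).eq_top_of_nonempty_interior' (hS.mono (interior_mono h))))

theorem exists_nonneg_apply_eq_zero_of_notMem_interior {S : Set E} (hS : Convex ℝ S)
    (hcone : ∀ v ∈ S, ∀ t : ℝ, 0 < t → t • v ∈ S) (h0 : (0 : E) ∈ S)
    (hint : (interior S).Nonempty) {x : E} (hx : x ∈ S) (hxi : x ∉ interior S) :
    ∃ f : E →ₗ[ℝ] ℝ, f ≠ 0 ∧ f x = 0 ∧ ∀ y ∈ S, 0 ≤ f y := by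
  obtain ⟨f, hf0, hmax⟩ := geometric_hahn_banach_of_nonempty_interior_point hS hxi hint
  have hfx : f x = 0 := by
    have h₁ := hmax 0 h0
    have h₂ := hmax _ (hcone x hx 2 two_pos)
    simp only [map_zero, map_smul, smul_eq_mul] at h₁ h₂
    linarith
  refine ⟨-(f : E →ₗ[ℝ] ℝ), ?_, by simp [hfx], fun y hy => by simpa [hfx] using hmax y hy⟩
  rwa [neg_ne_zero, Ne, ← ContinuousLinearMap.toLinearMap_zero, ContinuousLinearMap.coe_inj]

theorem exists_mem_inter_apply_gt_of_apply_pos (hC : Convex ℝ C)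
    (hCcone : ∀ v ∈ C, ∀ t : ℝ, 0 < t → t • v ∈ C) (hD : Convex ℝ D)
    (hDcone : ∀ v ∈ D, ∀ t : ℝ, 0 < t → t • v ∈ D) {p : E}
    (hp : p ∈ intrinsicInterior ℝ (C ∩ D)) {ψ : E →ₗ[ℝ] ℝ}
    (hker : ∀ z, ψ z = 0 → z ∈ (affineSpan ℝ (C ∩ D)).direction) {a b : E} (ha : a ∈ C)
    (hψa : 0 < ψ a) (hb : b ∈ D) (hψb : 0 < ψ b) : ∃ x ∈ C ∩ D, ψ p < ψ x := by
  obtain ⟨r, hr, hq⟩ := exists_pos_add_smul_mem_of_mem_intrinsicInterior hp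
    (hker (ψ a • b - ψ b • a) (by simp [mul_comm]))
  -- `q + (r * ψ b) • a = p + (r * ψ a) • b` with `q := p + r • (ψ a • b - ψ b • a) ∈ C ∩ D`
  have hpF := intrinsicInterior_subset hp
  refine ⟨p + (r * ψ a) • b,
    ⟨?_, hD.add_mem_of_smul_mem hDcone hpF.2 (hDcone b hb _ (by positivity))⟩, ?_⟩
  · convert hC.add_mem_of_smul_mem hCcone hq.1 (hCcone a ha (r * ψ b) (by positivity)) using 1
    module
  · simp only [map_add, map_smul, smul_eq_mul]
    nlinarith [mul_pos (mul_pos hr hψa) hψb]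

theorem exists_separating_functional_of_isExtreme (hC : Convex ℝ C)
    (hCcone : ∀ v ∈ C, ∀ t : ℝ, 0 < t → t • v ∈ C) (hD : Convex ℝ D)
    (hDcone : ∀ v ∈ D, ∀ t : ℝ, 0 < t → t • v ∈ D) (hfaceC : IsExtreme ℝ C (C ∩ D))
    (hfaceD : IsExtreme ℝ D (C ∩ D)) {p : E} (hp : p ∈ intrinsicInterior ℝ (C ∩ D))
    (h0 : (0 : E) ∈ C ∩ D) {φ : E →ₗ[ℝ] ℝ} (hφ : ∀ z, φ z = 0 ↔ z ∈ affineSpan ℝ (C ∩ D))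
    {a b : E} (ha : a ∈ C) (hφa : φ a ≠ 0) (hb : b ∈ D) (hφb : φ b ≠ 0) :
    ∃ ψ : E →ₗ[ℝ] ℝ, (∀ z, ψ z = 0 ↔ φ z = 0) ∧ (∀ y ∈ C, 0 ≤ ψ y) ∧ ∀ y ∈ D, ψ y ≤ 0 := by
  have hφF : ∀ y ∈ C ∩ D, φ y = 0 := fun y hy => (hφ y).2 (subset_affineSpan ℝ _ hy)
  have hsame : ∀ ψ : E →ₗ[ℝ] ℝ, (∀ z, ψ z = 0 ↔ φ z = 0) →
      (∀ y ∈ C, 0 ≤ ψ y) → (∀ y ∈ D, 0 ≤ ψ y) → False := by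
    intro ψ hψ hψC hψD
    have hdir : ∀ z, ψ z = 0 → z ∈ (affineSpan ℝ (C ∩ D)).direction := fun z hz => by
      simpa using AffineSubspace.vsub_mem_direction ((hφ z).1 ((hψ z).1 hz))
        (subset_affineSpan ℝ _ h0)
    obtain ⟨x, hx, hlt⟩ := exists_mem_inter_apply_gt_of_apply_pos hC hCcone hD hDcone hp hdir
      ha ((hψC a ha).lt_of_ne' ((hψ a).not.2 hφa)) hb ((hψD b hb).lt_of_ne' ((hψ b).not.2 hφb))
    rw [(hψ p).2 (hφF p (intrinsicInterior_subset hp)), (hψ x).2 (hφF x hx)] at hlt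
    exact hlt.false
  have hside : ∀ S, Convex ℝ S → IsExtreme ℝ S (C ∩ D) →
      (∀ y ∈ S, 0 ≤ φ y) ∨ ∀ y ∈ S, φ y ≤ 0 := fun S hS hSF =>
    hSF.forall_nonneg_or_forall_nonpos hS hφF fun y hy hφy =>
      hSF.inter_affineSpan_subset hp ⟨hy, (hφ y).1 hφy⟩
  have hneg : ∀ z, (-φ) z = 0 ↔ φ z = 0 := fun z => by simp
  rcases hside C hC hfaceC with hC' | hC' <;> rcases hside D hD hfaceD with hD' | hD'
  · exact (hsame φ (fun _ => Iff.rfl) hC' hD').elim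
  · exact ⟨φ, fun _ => Iff.rfl, hC', hD'⟩
  · exact ⟨-φ, hneg, by simpa using hC', by simpa using hD'⟩
  · exact (hsame (-φ) hneg (by simpa using hC') (by simpa using hD')).elim

theorem convex_union_of_mem_inter_of_apply_eq_zero (hC : Convex ℝ C) (hD : Convex ℝ D)
    {ψ : E →ₗ[ℝ] ℝ} (hψC : ∀ y ∈ C, 0 ≤ ψ y) (hψD : ∀ y ∈ D, ψ y ≤ 0)
    (hcross : ∀ a ∈ C, ∀ b ∈ D, ∀ z ∈ segment ℝ a b, ψ z = 0 → z ∈ C ∩ D) :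
    Convex ℝ (C ∪ D) := by
  have key : ∀ a ∈ C, ∀ b ∈ D, segment ℝ a b ⊆ C ∪ D := by
    intro a ha b hb
    obtain ⟨z, hz, hψz⟩ := exists_mem_segment_apply_eq_zero ψ (hψD b hb) (hψC a ha)
    rw [segment_symm] at hz
    have hzF := hcross a ha b hb z hz hψz
    exact (segment_subset_union_segment hz).trans
      (union_subset_union (hC.segment_subset ha hzF.1) (hD.segment_subset hzF.2 hb))
  refine convex_iff_segment_subset.2 ?_
  rintro a (ha | ha) b (hb | hb)
  · exact (hC.segment_subset ha hb).trans subset_union_left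
  · exact key a ha b hb
  · exact segment_symm ℝ a b ▸ key b hb a ha
  · exact (hD.segment_subset ha hb).trans subset_union_right

theorem mem_inter_of_mem_segment_of_apply_eq_zero (hF : IsClosed (C ∩ D)) {p : E}
    (hp : p ∈ intrinsicInterior ℝ (C ∩ D)) {ψ : E →ₗ[ℝ] ℝ}
    (hψA : ∀ z, ψ z = 0 → z ∈ affineSpan ℝ (C ∩ D)) {a b : E} (ha : a ∈ C) (hψa : 0 < ψ a)
    (hb : b ∈ D) (hψb : ψ b < 0)
    (hsupp : ∀ x ∈ intrinsicFrontier ℝ (C ∩ D),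
      ∃ f : E →ₗ[ℝ] ℝ, f ≠ 0 ∧ f x = 0 ∧ ∀ y ∈ C ∪ D, 0 ≤ f y)
    {y y' z : E} (hy : y ∈ C) (hy' : y' ∈ D) (hz : z ∈ segment ℝ y y') (hψz : ψ z = 0) :
    z ∈ C ∩ D := by
  by_contra hzF
  obtain ⟨x, hx, hxpz⟩ := exists_mem_intrinsicFrontier_openSegment hF hp (hψA z hψz) hzF
  obtain ⟨f, hf0, hfx, hf⟩ := hsupp x hx
  have hfz : 0 ≤ f z := (convex_halfSpace_ge f.isLinear 0).segment_subset
    (hf y (.inl hy)) (hf y' (.inr hy')) hz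
  have hfp : f p = 0 := by
    obtain ⟨α, β, hα, hβ, -, rfl⟩ := hxpz
    have hp0 := hf p (.inl (intrinsicInterior_subset hp).1)
    simp only [map_add, map_smul, smul_eq_mul] at hfx
    nlinarith [mul_nonneg hβ.le hfz, mul_nonneg hα.le hp0]
  have hker : LinearMap.ker ψ ≤ LinearMap.ker f := fun z hz =>
    f.apply_eq_zero_of_nonneg_of_mem_intrinsicInterior (fun y hy => hf y (.inl hy.1)) hp hfp
      (hψA z hz)
  exact hf0 (LinearMap.eq_zero_of_ker_le_of_nonneg hker hψa (hf a (.inl ha)) hψb (hf b (.inr hb)))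

end

/-- Let `D, D'` be closed convex subsets of `S^d` with nonempty interior
(encoded by closed convex cones `C, D ⊆ ℝ^{d+1}` with nonempty interior), meeting along
`F = D ∩ D'`, a codimension-1 face of both (a face is an extreme subset; codimension 1
means the span of `F` has dimension `d`, i.e. projective dimension `d − 1`).  Then
`D ∪ D'` is convex if and only if every point of the relative boundary `∂F` lies in the
boundary of a closed half-space of `S^d` containing `D ∪ D'`. -/
theorem union_convex_iff_halfspaces (d : ℕ) (C D : Set (Fin (d + 1) → ℝ))
    (hCcl : IsClosed C) (hDcl : IsClosed D)
    (hCconv : Convex ℝ C) (hDconv : Convex ℝ D)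
    (hCcone : ∀ v ∈ C, ∀ t : ℝ, 0 < t → t • v ∈ C)
    (hDcone : ∀ v ∈ D, ∀ t : ℝ, 0 < t → t • v ∈ D)
    (hCint : (interior C).Nonempty) (hDint : (interior D).Nonempty)
    (hfaceC : IsExtreme ℝ C (C ∩ D)) (hfaceD : IsExtreme ℝ D (C ∩ D))
    (hcodim : Module.finrank ℝ (Submodule.span ℝ (C ∩ D)) = d) :
    Convex ℝ (C ∪ D) ↔
      ∀ x ∈ intrinsicFrontier ℝ (C ∩ D),
        ∃ f : (Fin (d + 1) → ℝ) →ₗ[ℝ] ℝ, f ≠ 0 ∧ f x = 0 ∧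
          ∀ y ∈ C ∪ D, 0 ≤ f y := by
  have h0 : (0 : Fin (d + 1) → ℝ) ∈ C ∩ D :=
    ⟨zero_mem_of_isClosed_of_smul_mem hCcl (hCint.mono interior_subset) hCcone,
      zero_mem_of_isClosed_of_smul_mem hDcl (hDint.mono interior_subset) hDcone⟩
  obtain ⟨φ, hφ0, hφ⟩ := (Submodule.span ℝ (C ∩ D)).exists_ne_zero_ker_eq_of_finrank_add_one
    (by rw [hcodim, Module.finrank_fin_fun])
  have hφA : ∀ z, φ z = 0 ↔ z ∈ affineSpan ℝ (C ∩ D) := fun z => by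
    rw [← SetLike.mem_coe, ← insert_eq_of_mem h0, affineSpan_insert_zero, SetLike.mem_coe, ← hφ,
      LinearMap.mem_ker]
  obtain ⟨p, hp⟩ := Set.Nonempty.intrinsicInterior (hCconv.inter hDconv) ⟨0, h0⟩
  obtain ⟨a, ha, hφa⟩ := φ.exists_apply_ne_zero_of_nonempty_interior hφ0 hCint
  obtain ⟨b, hb, hφb⟩ := φ.exists_apply_ne_zero_of_nonempty_interior hφ0 hDint
  obtain ⟨ψ, hψφ, hψC, hψD⟩ := exists_separating_functional_of_isExtreme hCconv hCcone hDconv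
    hDcone hfaceC hfaceD hp h0 hφA ha hφa hb hφb
  constructor
  · intro hU x hx
    have hUA : (C ∪ D) ∩ affineSpan ℝ (C ∩ D) ⊆ C ∩ D := by
      rintro y ⟨hy | hy, hyA⟩
      exacts [hfaceC.inter_affineSpan_subset hp ⟨hy, hyA⟩,
        hfaceD.inter_affineSpan_subset hp ⟨hy, hyA⟩]
    exact exists_nonneg_apply_eq_zero_of_notMem_interior hU
      (fun v hv t ht => hv.imp (hCcone v · t ht) (hDcone v · t ht)) (.inl h0.1)
      (hCint.mono (interior_mono subset_union_left))
      (.inl (intrinsicFrontier_subset (hCcl.inter hDcl) hx).1)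
      (notMem_interior_of_mem_intrinsicFrontier hUA hx)
  · intro hsupp
    exact convex_union_of_mem_inter_of_apply_eq_zero hCconv hDconv hψC hψD
      fun y hy y' hy' z hz hψz => mem_inter_of_mem_segment_of_apply_eq_zero (hCcl.inter hDcl) hp
        (fun z hz => (hφA z).1 ((hψφ z).1 hz)) ha ((hψC a ha).lt_of_ne' ((hψφ a).not.2 hφa))
        hb ((hψD b hb).lt_of_ne ((hψφ b).not.2 hφb)) hsupp hy hy' hz hψz
end

section
/- Let g ∈ GL_2(ℝ) with |det(g)|^{-1/2}·g ≠ ±I_2 and let Ω ⊂ S¹ be a nonempty open connected g-invariant subset that is a proper convex arc (contained in a half-circle and not meeting the fixed lines of g). Then tr(|det(g)|^{-1/2}·g) ≥ 2. Conversely, if tr(|det(g)|^{-1/2}·g) ≥ 2 with |det(g)|^{-1/2}·g ≠ I_2, and Ω is a connected g-invariant open arc of S¹ not meeting any eigenline of g, then Ω is contained in a half-circle. -/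
open Matrix

noncomputable section



def IAcrossF (w v : Fin 2 → ℝ) : ℝ := w 0 * v 1 - w 1 * v 0

noncomputable def IAcrossL (w : Fin 2 → ℝ) : (Fin 2 → ℝ) →ₗ[ℝ] ℝ where
  toFun v := IAcrossF w v
  map_add' x y := by simp [IAcrossF]; ring
  map_smul' c x := by simp [IAcrossF]; ring

lemma IAcrossL_apply (w v : Fin 2 → ℝ) : IAcrossL w v = IAcrossF w v := rfl

lemma IAcrossF_cont (w : Fin 2 → ℝ) : Continuous (fun v => IAcrossF w v) := by
  unfold IAcrossF
  exact (continuous_const.mul (continuous_apply 1)).sub (continuous_const.mul (continuous_apply 0))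

lemma IAvec_ne (w : Fin 2 → ℝ) (hw : w ≠ 0) : w 0 ≠ 0 ∨ w 1 ≠ 0 := by
  by_contra h
  push_neg at h
  exact hw (funext fun i => by fin_cases i <;> simp [h.1, h.2])

lemma IAcrossL_ne_zero (w : Fin 2 → ℝ) (hw : w ≠ 0) : IAcrossL w ≠ 0 := by
  intro h
  have h2 : IAcrossL w ![-(w 1), w 0] = 0 := by rw [h]; rfl
  rw [IAcrossL_apply] at h2
  unfold IAcrossF at h2
  simp at h2
  rcases IAvec_ne w hw with h0 | h1
  · nlinarith [mul_self_pos.mpr h0, mul_self_nonneg (w 1)]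
  · nlinarith [mul_self_pos.mpr h1, mul_self_nonneg (w 0)]

lemma IAcrossF_mulVec (g : Matrix (Fin 2) (Fin 2) ℝ) (a b : Fin 2 → ℝ) :
    IAcrossF (g.mulVec a) (g.mulVec b) = g.det * IAcrossF a b := by
  simp [IAcrossF, Matrix.mulVec, dotProduct, Fin.sum_univ_two, Matrix.det_fin_two]
  ring

lemma IAcrossF_smul_left (c : ℝ) (w v : Fin 2 → ℝ) :
    IAcrossF (c • w) v = c * IAcrossF w v := by
  simp [IAcrossF]; ring

lemma IAcrossF_neg_left (w v : Fin 2 → ℝ) :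
    IAcrossF (-w) v = -IAcrossF w v := by
  simp [IAcrossF]; ring

lemma IAeig_of_cross_zero (g : Matrix (Fin 2) (Fin 2) ℝ) (w v : Fin 2 → ℝ) (μ : ℝ)
    (hw : w ≠ 0) (hgw : g.mulVec w = μ • w) (hv : IAcrossF w v = 0) :
    g.mulVec v = μ • v := by
  unfold IAcrossF at hv
  obtain ⟨a, ha⟩ : ∃ a : ℝ, v = a • w := by
    rcases IAvec_ne w hw with h0 | h1
    · refine ⟨v 0 / w 0, funext fun i => ?_⟩
      fin_cases i
      · simp [Pi.smul_apply, smul_eq_mul]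
        field_simp
      · simp [Pi.smul_apply, smul_eq_mul]
        field_simp
        linear_combination hv
    · refine ⟨v 1 / w 1, funext fun i => ?_⟩
      fin_cases i
      · simp [Pi.smul_apply, smul_eq_mul]
        field_simp
        linear_combination -hv
      · simp [Pi.smul_apply, smul_eq_mul]
        field_simp
  rw [ha, Matrix.mulVec_smul, hgw, smul_comm]

lemma IAsign {C : Set (Fin 2 → ℝ)} (hC : IsConnected C) {F : (Fin 2 → ℝ) → ℝ}
    (hF : Continuous F) (hne : ∀ v ∈ C, F v ≠ 0) {v1 v2 : Fin 2 → ℝ}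
    (h1 : v1 ∈ C) (h2 : v2 ∈ C) (hpos : 0 < F v1) : 0 < F v2 := by
  by_contra hneg
  have h2' : F v2 < 0 := lt_of_le_of_ne (not_lt.mp hneg) (hne v2 h2)
  have himg : IsPreconnected (F '' C) := (hC.image F hF.continuousOn).isPreconnected
  have h0 : (0:ℝ) ∈ F '' C :=
    himg.Icc_subset ⟨v2, h2, rfl⟩ ⟨v1, h1, rfl⟩ ⟨h2'.le, hpos.le⟩
  obtain ⟨v, hv, hv0⟩ := h0
  exact hne v hv hv0

lemma IAexists_eigen (g : Matrix (Fin 2) (Fin 2) ℝ) (μ : ℝ)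
    (hroot : μ ^ 2 - g.trace * μ + g.det = 0) :
    ∃ w : Fin 2 → ℝ, w ≠ 0 ∧ g.mulVec w = μ • w := by
  have hdet : (g - μ • 1).det = 0 := by
    rw [Matrix.trace_fin_two, Matrix.det_fin_two] at hroot
    rw [Matrix.det_fin_two]
    simp only [Matrix.sub_apply, Matrix.smul_apply, Matrix.one_apply_eq,
      Matrix.one_apply_ne (by decide : (0:Fin 2) ≠ 1),
      Matrix.one_apply_ne (by decide : (1:Fin 2) ≠ 0), smul_eq_mul]
    linear_combination hroot
  obtain ⟨w, hw0, hw⟩ := (Matrix.exists_mulVec_eq_zero_iff).mpr hdet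
  refine ⟨w, hw0, ?_⟩
  rwa [Matrix.sub_mulVec, Matrix.smul_mulVec, Matrix.one_mulVec, sub_eq_zero] at hw



lemma IAsq (M : Matrix (Fin 2) (Fin 2) ℝ) :
    M * M = M.trace • M - M.det • (1 : Matrix (Fin 2) (Fin 2) ℝ) := by
  ext i j
  fin_cases i <;> fin_cases j <;>
    simp [Matrix.mul_apply, Fin.sum_univ_two, Matrix.trace_fin_two, Matrix.det_fin_two,
      Matrix.one_apply] <;> ring

set_option maxHeartbeats 1600000 in
lemma IAelliptic (g : Matrix (Fin 2) (Fin 2) ℝ) (hd : 0 < g.det)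
    (ht2 : (Real.sqrt |g.det|)⁻¹ * g.trace < 2)
    (ht2' : -2 < (Real.sqrt |g.det|)⁻¹ * g.trace)
    (C : Set (Fin 2 → ℝ)) (hCo : IsOpen C) (hCne : C.Nonempty) (hconv : Convex ℝ C)
    (hcone : ∀ v ∈ C, ∀ t : ℝ, 0 < t → t • v ∈ C)
    (hinv : g.mulVec '' C = C) : (0 : Fin 2 → ℝ) ∈ C := by
  have habs : |g.det| = g.det := abs_of_pos hd
  set s : ℝ := (Real.sqrt |g.det|)⁻¹ with hs_def
  have hsq : Real.sqrt |g.det| ^ 2 = g.det := by rw [Real.sq_sqrt (abs_nonneg _), habs]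
  have hsqpos : 0 < Real.sqrt |g.det| := Real.sqrt_pos.mpr (by rw [habs]; exact hd)
  have hs : 0 < s := inv_pos.mpr hsqpos
  set h : Matrix (Fin 2) (Fin 2) ℝ := s • g with hh_def
  set t : ℝ := s * g.trace with ht_def
  have hdh : h.det = 1 := by
    rw [hh_def, Matrix.det_smul]
    simp only [Fintype.card_fin]
    rw [hs_def, inv_pow, hsq]
    exact inv_mul_cancel₀ (ne_of_gt hd)
  have hth : h.trace = t := by rw [hh_def, Matrix.trace_smul]; rfl
  have htabs : |t| < 2 := abs_lt.mpr ⟨ht2', ht2⟩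
  -- Cayley–Hamilton
  have hCH : h * h = t • h - 1 := by
    rw [IAsq h, hdh, hth, one_smul]
  -- C is stable under h
  have hstep : ∀ v ∈ C, h.mulVec v ∈ C := by
    intro v hv
    have : g.mulVec v ∈ C := hinv ▸ Set.mem_image_of_mem _ hv
    rw [hh_def, Matrix.smul_mulVec]
    exact hcone _ this s hs
  -- multiplication rules
  have hmul1 : ∀ a b : ℝ, (a • (1:Matrix (Fin 2) (Fin 2) ℝ) + b • h) * h
      = (-b) • 1 + (a + b * t) • h := by
    intro a b
    rw [add_mul, smul_mul_assoc, smul_mul_assoc, one_mul, hCH]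
    module
  have hmul2 : ∀ a b : ℝ, (a • (1:Matrix (Fin 2) (Fin 2) ℝ) + b • h) * (t • 1 - h)
      = (a * t + b) • 1 + (-a) • h := by
    intro a b
    rw [mul_sub, mul_smul_comm, mul_one, hmul1 a b]
    module
  -- representation of powers
  have hrep : ∀ n : ℕ,
      (∃ a b : ℝ, h ^ n = a • 1 + b • h ∧ a^2 + a*b*t + b^2 = 1) ∧
      (∃ a b : ℝ, (t • 1 - h) ^ n = a • 1 + b • h ∧ a^2 + a*b*t + b^2 = 1) := by
    intro n
    induction n with
    | zero => exact ⟨⟨1, 0, by simp, by ring⟩, ⟨1, 0, by simp, by ring⟩⟩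
    | succ n ih =>
      obtain ⟨⟨a, b, hab, hq⟩, ⟨c, d, hcd, hq2⟩⟩ := ih
      refine ⟨⟨-b, a + b*t, ?_, by linear_combination hq⟩,
              ⟨c*t + d, -c, ?_, by linear_combination hq2⟩⟩
      · rw [pow_succ, hab, hmul1]
      · rw [pow_succ, hcd, hmul2]
  -- quadratic form bound
  have hKb : ∀ a b : ℝ, a^2 + a*b*t + b^2 = 1 → (2 - |t|) * (a^2 + b^2) ≤ 2 := by
    intro a b hq
    rcases abs_cases t with ⟨he, ht0⟩ | ⟨he, ht0⟩ <;> rw [he]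
    · nlinarith [mul_nonneg ht0 (sq_nonneg (a+b))]
    · nlinarith [mul_nonneg (neg_nonneg.mpr ht0.le) (sq_nonneg (a-b))]
  have h2t : (0:ℝ) < 2 - |t| := by linarith
  set B : ℝ := Real.sqrt (2 / (2 - |t|)) with hB_def
  have hB1 : 1 ≤ B := by
    rw [hB_def, show (1:ℝ) = Real.sqrt 1 by simp]
    apply Real.sqrt_le_sqrt
    rw [le_div_iff₀ h2t]
    nlinarith [abs_nonneg t]
  have habB : ∀ a b : ℝ, a^2 + a*b*t + b^2 = 1 → |a| ≤ B ∧ |b| ≤ B := by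
    intro a b hq
    have hk := hKb a b hq
    constructor <;> rw [← Real.sqrt_sq_eq_abs, hB_def] <;>
      apply Real.sqrt_le_sqrt <;> rw [le_div_iff₀ h2t] <;> nlinarith [sq_nonneg a, sq_nonneg b]
  -- operator bound
  set Lh := LinearMap.toContinuousLinearMap (Matrix.mulVecLin h) with hLh_def
  have hLh : ∀ x : Fin 2 → ℝ, ‖h.mulVec x‖ ≤ ‖Lh‖ * ‖x‖ := by
    intro x
    have := Lh.le_opNorm x
    simpa [hLh_def] using this
  set M : ℝ := B * (1 + ‖Lh‖) with hM_def
  have hM1 : 1 ≤ M := by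
    have := norm_nonneg Lh
    nlinarith
  have hMpos : 0 < M := lt_of_lt_of_le one_pos hM1
  have hMbound : ∀ m : Matrix (Fin 2) (Fin 2) ℝ,
      (∃ a b : ℝ, m = a • 1 + b • h ∧ a^2 + a*b*t + b^2 = 1) →
      ∀ x : Fin 2 → ℝ, ‖m.mulVec x‖ ≤ M * ‖x‖ := by
    rintro m ⟨a, b, hab, hq⟩ x
    obtain ⟨ha, hb⟩ := habB a b hq
    rw [hab, Matrix.add_mulVec, Matrix.smul_mulVec, Matrix.smul_mulVec,
      Matrix.one_mulVec]
    calc ‖a • x + b • h.mulVec x‖ ≤ ‖a • x‖ + ‖b • h.mulVec x‖ := norm_add_le _ _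
      _ = |a| * ‖x‖ + |b| * ‖h.mulVec x‖ := by rw [norm_smul, norm_smul]; simp [Real.norm_eq_abs]
      _ ≤ M * ‖x‖ := by
          have h1 : |a| * ‖x‖ ≤ B * ‖x‖ := mul_le_mul_of_nonneg_right ha (norm_nonneg x)
          have h2 : |b| * ‖h.mulVec x‖ ≤ B * (‖Lh‖ * ‖x‖) :=
            mul_le_mul hb (hLh x) (norm_nonneg _) (le_trans zero_le_one hB1)
          rw [hM_def]; nlinarith [norm_nonneg x, norm_nonneg Lh]
  -- inverses
  set h' : Matrix (Fin 2) (Fin 2) ℝ := t • 1 - h with hh'_def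
  have hhh' : h * h' = 1 := by
    rw [hh'_def, mul_sub, mul_smul_comm, mul_one, hCH]
    exact sub_sub_cancel _ _
  have hh'h : h' * h = 1 := by
    rw [hh'_def, sub_mul, smul_mul_assoc, one_mul, hCH]
    exact sub_sub_cancel _ _
  have hcommn : ∀ n : ℕ, h ^ n * h' ^ n = 1 := by
    intro n
    have hc : Commute h h' := by unfold Commute SemiconjBy; rw [hhh', hh'h]
    rw [← hc.mul_pow, hhh', one_pow]
  -- C stable under powers of h
  have hpowC : ∀ n : ℕ, ∀ v ∈ C, (h ^ n).mulVec v ∈ C := by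
    intro n
    induction n with
    | zero => intro v hv; simpa using hv
    | succ n ih =>
      intro v hv
      rw [pow_succ, ← Matrix.mulVec_mulVec]
      exact ih _ (hstep v hv)
  -- balls
  obtain ⟨v0, hv0⟩ := hCne
  obtain ⟨ε, hε, hball⟩ := Metric.isOpen_iff.mp hCo v0 hv0
  set δ : ℝ := ε / M with hδ_def
  have hδ : 0 < δ := div_pos hε hMpos
  have hballn : ∀ n : ℕ, ∀ u : Fin 2 → ℝ, ‖u‖ < δ → (h ^ n).mulVec v0 + u ∈ C := by
    intro n u hu
    have hmem : v0 + (h' ^ n).mulVec u ∈ C := by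
      apply hball
      rw [Metric.mem_ball, dist_eq_norm, add_sub_cancel_left]
      calc ‖(h' ^ n).mulVec u‖ ≤ M * ‖u‖ := hMbound _ (hrep n).2 u
        _ < M * δ := by exact mul_lt_mul_of_pos_left hu hMpos
        _ = ε := by rw [hδ_def]; field_simp
    have h2 := hpowC n _ hmem
    rw [Matrix.mulVec_add, Matrix.mulVec_mulVec, hcommn n, Matrix.one_mulVec] at h2
    exact h2
  clear_value M δ
  -- geometric sums
  have hdet1 : (h - 1).det = 2 - t := by
    have e1 : h.det = h 0 0 * h 1 1 - h 0 1 * h 1 0 := Matrix.det_fin_two h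
    have e2 : h.trace = h 0 0 + h 1 1 := Matrix.trace_fin_two h
    rw [hdh] at e1; rw [hth] at e2
    rw [Matrix.det_fin_two]
    simp only [Matrix.sub_apply, Matrix.one_apply_eq,
      Matrix.one_apply_ne (by decide : (0:Fin 2) ≠ 1),
      Matrix.one_apply_ne (by decide : (1:Fin 2) ≠ 0)]
    linear_combination -e1 + e2
  have hdet1' : IsUnit (h - 1).det := by
    rw [hdet1]; exact isUnit_iff_ne_zero.mpr (by linarith)
  have hsum : ∀ N : ℕ, (∑ i ∈ Finset.range N, h ^ i) = (h ^ N - 1) * (h - 1)⁻¹ := by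
    intro N
    have hg := geom_sum_mul h N
    calc (∑ i ∈ Finset.range N, h ^ i)
        = (∑ i ∈ Finset.range N, h ^ i) * ((h - 1) * (h - 1)⁻¹) := by
          rw [Matrix.mul_nonsing_inv _ hdet1', mul_one]
      _ = ((∑ i ∈ Finset.range N, h ^ i) * (h - 1)) * (h - 1)⁻¹ := by rw [mul_assoc]
      _ = (h ^ N - 1) * (h - 1)⁻¹ := by rw [hg]
  set u0 : Fin 2 → ℝ := ((h - 1)⁻¹).mulVec v0 with hu0_def
  clear_value u0
  have hEq : ∀ N : ℕ, (∑ i ∈ Finset.range N, h ^ i).mulVec v0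
      = ∑ i ∈ Finset.range N, (h ^ i).mulVec v0 := by
    intro N
    induction N with
    | zero => simp
    | succ n ih => rw [Finset.sum_range_succ, Finset.sum_range_succ, Matrix.add_mulVec, ih]
  have hnormS : ∀ N : ℕ, ‖(∑ i ∈ Finset.range N, h ^ i).mulVec v0‖ ≤ M * ‖u0‖ + ‖u0‖ := by
    intro N
    rw [hsum N, ← Matrix.mulVec_mulVec, ← hu0_def, Matrix.sub_mulVec, Matrix.one_mulVec]
    calc ‖(h ^ N).mulVec u0 - u0‖ ≤ ‖(h ^ N).mulVec u0‖ + ‖u0‖ := norm_sub_le _ _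
      _ ≤ M * ‖u0‖ + ‖u0‖ := by
          have := hMbound _ (hrep N).1 u0
          linarith
  -- choose N
  obtain ⟨N, hN⟩ := exists_nat_gt ((M * ‖u0‖ + ‖u0‖) / δ)
  have hNpos : 0 < (N:ℝ) := by
    have h0 : (0:ℝ) ≤ (M * ‖u0‖ + ‖u0‖) / δ :=
      div_nonneg (by have h1 : (0:ℝ) ≤ M * ‖u0‖ := mul_nonneg hMpos.le (norm_nonneg u0)
                     have h2 : (0:ℝ) ≤ ‖u0‖ := norm_nonneg u0
                     linarith) hδ.le
    linarith
  have hNne : (N:ℝ) ≠ 0 := ne_of_gt hNpos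
  set vN : Fin 2 → ℝ := (N:ℝ)⁻¹ • ∑ i ∈ Finset.range N, (h ^ i).mulVec v0 with hvN_def
  have hvNlt : ‖vN‖ < δ := by
    rw [hvN_def, norm_smul, ← hEq]
    have h1 : ‖(∑ i ∈ Finset.range N, h ^ i).mulVec v0‖ ≤ M * ‖u0‖ + ‖u0‖ := hnormS N
    have h2 : M * ‖u0‖ + ‖u0‖ < N * δ := by
      rw [div_lt_iff₀ hδ] at hN
      linarith
    have h3 : ‖(N:ℝ)⁻¹‖ = (N:ℝ)⁻¹ := by
      rw [Real.norm_eq_abs, abs_of_pos (inv_pos.mpr hNpos)]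
    rw [h3]
    rw [inv_mul_lt_iff₀ hNpos]
    calc ‖(∑ i ∈ Finset.range N, h ^ i).mulVec v0‖ ≤ M * ‖u0‖ + ‖u0‖ := h1
      _ < N * δ := h2
  -- convexity average
  have hmem : ∑ i ∈ Finset.range N, (N:ℝ)⁻¹ • ((h ^ i).mulVec v0 + (-vN)) ∈ C := by
    apply hconv.sum_mem
    · intro i _; positivity
    · rw [Finset.sum_const, Finset.card_range, nsmul_eq_mul, mul_inv_cancel₀ hNne]
    · intro i _
      exact hballn i (-vN) (by rwa [norm_neg])
  have hzero : ∑ i ∈ Finset.range N, (N:ℝ)⁻¹ • ((h ^ i).mulVec v0 + (-vN)) = 0 := by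
    have e1 : ∀ i : ℕ, (N:ℝ)⁻¹ • ((h ^ i).mulVec v0 + (-vN))
        = (N:ℝ)⁻¹ • (h ^ i).mulVec v0 + (N:ℝ)⁻¹ • (-vN) := fun i => smul_add _ _ _
    simp_rw [e1]
    rw [Finset.sum_add_distrib, ← Finset.smul_sum, Finset.sum_const, Finset.card_range,
      ← hvN_def]
    have : (N : ℕ) • ((N:ℝ)⁻¹ • (-vN)) = (N:ℝ) • ((N:ℝ)⁻¹ • (-vN)) :=
      (Nat.cast_smul_eq_nsmul ℝ N _).symm
    rw [this, smul_smul, mul_inv_cancel₀ hNne, one_smul, add_neg_cancel]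
  rw [hzero] at hmem
  exact hmem

lemma IAno_invariant (g : Matrix (Fin 2) (Fin 2) ℝ) (w : Fin 2 → ℝ) (μ : ℝ)
    (hw : w ≠ 0) (hgw : g.mulVec w = μ • w) (hμ : μ ≠ 0) (hc : g.det / μ < 0)
    (C : Set (Fin 2 → ℝ)) (hconn : IsConnected C)
    (hinv : g.mulVec '' C = C)
    (heig : ∀ v ∈ C, ¬ ∃ c : ℝ, g.mulVec v = c • v) : False := by
  obtain ⟨v0, hv0⟩ := hconn.nonempty
  have hgv0 : g.mulVec v0 ∈ C := hinv ▸ Set.mem_image_of_mem _ hv0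
  have hrel : ∀ v : Fin 2 → ℝ, IAcrossF w (g.mulVec v) = (g.det / μ) * IAcrossF w v := by
    intro v
    have h1 : IAcrossF (g.mulVec w) (g.mulVec v) = g.det * IAcrossF w v := IAcrossF_mulVec g w v
    rw [hgw, IAcrossF_smul_left] at h1
    field_simp
    linear_combination h1
  have hne : ∀ v ∈ C, IAcrossF w v ≠ 0 := fun v hv h0 =>
    heig v hv ⟨μ, IAeig_of_cross_zero g w v μ hw hgw h0⟩
  rcases (hne v0 hv0).lt_or_gt with hneg | hpos
  · have hne' : ∀ v ∈ C, -IAcrossF w v ≠ 0 := fun v hv => neg_ne_zero.mpr (hne v hv)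
    have h2 : 0 < -IAcrossF w (g.mulVec v0) :=
      IAsign hconn (F := fun v => -IAcrossF w v) ((IAcrossF_cont w).neg) hne' hv0 hgv0
        (by simpa using neg_pos.mpr hneg)
    rw [hrel v0] at h2
    nlinarith
  · have h2 : 0 < IAcrossF w (g.mulVec v0) :=
      IAsign hconn (IAcrossF_cont w) hne hv0 hgv0 hpos
    rw [hrel v0] at h2
    nlinarith

lemma IAhalf_plane (g : Matrix (Fin 2) (Fin 2) ℝ) (w : Fin 2 → ℝ) (μ : ℝ)
    (hw : w ≠ 0) (hgw : g.mulVec w = μ • w)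
    (C : Set (Fin 2 → ℝ)) (hconn : IsConnected C)
    (heig : ∀ v ∈ C, ¬ ∃ c : ℝ, g.mulVec v = c • v) :
    ∃ f : (Fin 2 → ℝ) →ₗ[ℝ] ℝ, f ≠ 0 ∧ ∀ v ∈ C, 0 ≤ f v := by
  have hne : ∀ v ∈ C, IAcrossF w v ≠ 0 := fun v hv h0 =>
    heig v hv ⟨μ, IAeig_of_cross_zero g w v μ hw hgw h0⟩
  obtain ⟨v1, hv1⟩ := hconn.nonempty
  rcases (hne v1 hv1).lt_or_gt with hneg | hpos
  · refine ⟨IAcrossL (-w), IAcrossL_ne_zero _ (neg_ne_zero.mpr hw), fun v hv => ?_⟩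
    have hne' : ∀ v ∈ C, -IAcrossF w v ≠ 0 := fun v hv => neg_ne_zero.mpr (hne v hv)
    have h2 : 0 < -IAcrossF w v :=
      IAsign hconn (F := fun v => -IAcrossF w v) ((IAcrossF_cont w).neg) hne' hv1 hv
        (by simpa using neg_pos.mpr hneg)
    rw [IAcrossL_apply, IAcrossF_neg_left]
    linarith
  · refine ⟨IAcrossL w, IAcrossL_ne_zero _ hw, fun v hv => ?_⟩
    rw [IAcrossL_apply]
    exact (IAsign hconn (IAcrossF_cont w) hne hv1 hv hpos).le


/-- Let `g ∈ GL₂(ℝ)`.  An open subset `Ω ⊂ S¹` (the circle of rays of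
`ℝ²`) is encoded by its cone `C ⊆ ℝ²`; `Ω` is an arc when `C` is connected, a convex arc
when `C` is moreover convex, and `Ω` is contained in a half-circle when `C` lies in a
closed linear half-plane.  Fixed points of `g` on `S¹` correspond to eigenvectors of `g`.

First part: if `|det g|^{-1/2}·g ≠ ±I₂` and there is a nonempty open connected convex
`g`-invariant cone `C` contained in a closed half-plane and containing no eigenvector of
`g`, then `tr(|det g|^{-1/2}·g) ≥ 2`.

Converse: if `tr(|det g|^{-1/2}·g) ≥ 2` and `|det g|^{-1/2}·g ≠ I₂`, then every nonempty
open connected `g`-invariant cone `C` containing no eigenvector of `g` is contained in a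
closed half-plane. -/
theorem invariant_arc_trace_criterion (g : Matrix (Fin 2) (Fin 2) ℝ) (hg : g.det ≠ 0) :
    (((Real.sqrt |g.det|)⁻¹ • g ≠ 1 ∧ (Real.sqrt |g.det|)⁻¹ • g ≠ -1) →
      ∀ C : Set (Fin 2 → ℝ), IsOpen C → C.Nonempty → IsConnected C → Convex ℝ C →
        (∀ v ∈ C, ∀ t : ℝ, 0 < t → t • v ∈ C) →
        g.mulVec '' C = C →
        (∀ v ∈ C, ¬ ∃ c : ℝ, g.mulVec v = c • v) →
        (∃ f : (Fin 2 → ℝ) →ₗ[ℝ] ℝ, f ≠ 0 ∧ ∀ v ∈ C, 0 ≤ f v) →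
        2 ≤ (Real.sqrt |g.det|)⁻¹ * g.trace) ∧
    ((2 ≤ (Real.sqrt |g.det|)⁻¹ * g.trace ∧ (Real.sqrt |g.det|)⁻¹ • g ≠ 1) →
      ∀ C : Set (Fin 2 → ℝ), IsOpen C → C.Nonempty → IsConnected C →
        (∀ v ∈ C, ∀ t : ℝ, 0 < t → t • v ∈ C) →
        g.mulVec '' C = C →
        (∀ v ∈ C, ¬ ∃ c : ℝ, g.mulVec v = c • v) →
        ∃ f : (Fin 2 → ℝ) →ₗ[ℝ] ℝ, f ≠ 0 ∧ ∀ v ∈ C, 0 ≤ f v) := by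
  have habspos : 0 < |g.det| := abs_pos.mpr hg
  have hsqpos : 0 < Real.sqrt |g.det| := Real.sqrt_pos.mpr habspos
  have hsq2 : Real.sqrt |g.det| ^ 2 = |g.det| := Real.sq_sqrt (abs_nonneg _)
  constructor
  · rintro ⟨h1, h2⟩ C hCo hCne hconn hconv hcone hinv heig ⟨f, hf0, hfC⟩
    by_contra hlt
    push_neg at hlt
    rcases lt_or_gt_of_ne hg with hdneg | hdpos
    · -- det g < 0 : positive eigenvalue
      have hD : 0 < g.trace ^ 2 - 4 * g.det := by nlinarith [sq_nonneg g.trace]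
      have hsqD : Real.sqrt (g.trace ^ 2 - 4 * g.det) ^ 2 = g.trace ^ 2 - 4 * g.det :=
        Real.sq_sqrt hD.le
      have habsD : |g.trace| < Real.sqrt (g.trace ^ 2 - 4 * g.det) := by
        rw [← Real.sqrt_sq_eq_abs]
        exact Real.sqrt_lt_sqrt (sq_nonneg _) (by nlinarith)
      set μ : ℝ := (g.trace + Real.sqrt (g.trace ^ 2 - 4 * g.det)) / 2 with hμ_def
      have hμpos : 0 < μ := by
        have := neg_abs_le g.trace
        rw [hμ_def]; linarith
      have hroot : μ ^ 2 - g.trace * μ + g.det = 0 := by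
        rw [hμ_def]; linear_combination (1/4 : ℝ) * hsqD
      obtain ⟨w, hw0, hgw⟩ := IAexists_eigen g μ hroot
      exact IAno_invariant g w μ hw0 hgw (ne_of_gt hμpos)
        (div_neg_of_neg_of_pos hdneg hμpos) C hconn hinv heig
    · rcases le_or_gt ((Real.sqrt |g.det|)⁻¹ * g.trace) (-2) with htle | htgt
      · -- t ≤ -2 : negative eigenvalue
        have habs : |g.det| = g.det := abs_of_pos hdpos
        have htr : g.trace ≤ -2 * Real.sqrt |g.det| := by
          have h3 : Real.sqrt |g.det| * ((Real.sqrt |g.det|)⁻¹ * g.trace)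
              ≤ Real.sqrt |g.det| * (-2) := mul_le_mul_of_nonneg_left htle hsqpos.le
          rw [← mul_assoc, mul_inv_cancel₀ (ne_of_gt hsqpos), one_mul] at h3
          linarith
        have htrneg : g.trace < 0 := by nlinarith
        have hD : 0 ≤ g.trace ^ 2 - 4 * g.det := by nlinarith [hsq2, habs]
        have hsqD : Real.sqrt (g.trace ^ 2 - 4 * g.det) ^ 2 = g.trace ^ 2 - 4 * g.det :=
          Real.sq_sqrt hD
        set μ : ℝ := (g.trace - Real.sqrt (g.trace ^ 2 - 4 * g.det)) / 2 with hμ_def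
        have hroot : μ ^ 2 - g.trace * μ + g.det = 0 := by
          rw [hμ_def]; linear_combination (1/4 : ℝ) * hsqD
        have hμneg : μ < 0 := by
          rcases lt_or_ge μ 0 with hm | hm
          · exact hm
          · exfalso; nlinarith [mul_nonneg (neg_nonneg.mpr htrneg.le) hm]
        obtain ⟨w, hw0, hgw⟩ := IAexists_eigen g μ hroot
        exact IAno_invariant g w μ hw0 hgw (ne_of_lt hμneg)
          (div_neg_of_pos_of_neg hdpos hμneg) C hconn hinv heig
      · -- elliptic
        have h0 := IAelliptic g hdpos hlt htgt C hCo hCne hconv hcone hinv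
        exact heig 0 h0 ⟨0, by simp⟩
  · rintro ⟨ht, hne1⟩ C hCo hCne hconn hcone hinv heig
    have hD : 0 ≤ g.trace ^ 2 - 4 * g.det := by
      rcases lt_or_gt_of_ne hg with hdn | hdp
      · nlinarith [sq_nonneg g.trace]
      · have h1 : 2 * Real.sqrt |g.det| ≤ g.trace := by
          have h3 : Real.sqrt |g.det| * 2
              ≤ Real.sqrt |g.det| * ((Real.sqrt |g.det|)⁻¹ * g.trace) :=
            mul_le_mul_of_nonneg_left ht hsqpos.le
          rw [← mul_assoc, mul_inv_cancel₀ (ne_of_gt hsqpos), one_mul] at h3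
          linarith
        have habs : |g.det| = g.det := abs_of_pos hdp
        nlinarith [hsq2, hsqpos]
    have hsqD : Real.sqrt (g.trace ^ 2 - 4 * g.det) ^ 2 = g.trace ^ 2 - 4 * g.det :=
      Real.sq_sqrt hD
    set μ : ℝ := (g.trace + Real.sqrt (g.trace ^ 2 - 4 * g.det)) / 2 with hμ_def
    have hroot : μ ^ 2 - g.trace * μ + g.det = 0 := by
      rw [hμ_def]; linear_combination (1/4 : ℝ) * hsqD
    obtain ⟨w, hw0, hgw⟩ := IAexists_eigen g μ hroot
    exact IAhalf_plane g w μ hw0 hgw C hconn heig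

end
end
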